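/- arXiv:2410.03050 — 2 statements merged into one kernel-verified Lean document; each statement's English description precedes it below -/
import Mathlib

section
/- Suppose (x̂, 0) ∈ A(λ̂, r̂) for some (λ̂, r̂) ∈ ℝᵐ × (0, ∞). Then: h(x̂) = 0; x̂ is an optimal solution of the primal problem (NLP), i.e. f(x̂) ≤ f(x) for every x with h(x) = 0; (λ̂, r̂) is an optimal dual solution, i.e. q̃(λ, r) ≤ q̃(λ̂, r̂) for every (λ, r) ∈ ℝᵐ × (0, ∞); and there is no duality gap: q̃(λ̂, r̂) = f(x̂). -/
noncomputable section

open Classical in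
/-- The extended-real-valued smoothing function `L̃_{λ,r}(x,t)`. -/
def Ltilde {n m : ℕ} (f : EuclideanSpace ℝ (Fin n) → ℝ)
    (h : EuclideanSpace ℝ (Fin n) → EuclideanSpace ℝ (Fin m))
    (lam : EuclideanSpace ℝ (Fin m)) (r : ℝ)
    (x : EuclideanSpace ℝ (Fin n)) (t : ℝ) : EReal :=
  if 0 < t then
    (((f x + (inner ℝ lam (h x) : ℝ) + r / (2 * t) * ‖h x‖ ^ 2 + r / 2 * t) : ℝ) : EReal)
  else if t = 0 ∧ h x = 0 then ((f x : ℝ) : EReal)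
  else ⊤

/-- The augmented dual function `q̃(λ, r) = inf_{(x,t)} L̃_{λ,r}(x,t)`. -/
def qtilde {n m : ℕ} (f : EuclideanSpace ℝ (Fin n) → ℝ)
    (h : EuclideanSpace ℝ (Fin n) → EuclideanSpace ℝ (Fin m))
    (lam : EuclideanSpace ℝ (Fin m)) (r : ℝ) : EReal :=
  ⨅ p : EuclideanSpace ℝ (Fin n) × ℝ, Ltilde f h lam r p.1 p.2

/-- The set `A(λ, r)` of global minimizers of `L̃_{λ,r}`. -/
def Aset {n m : ℕ} (f : EuclideanSpace ℝ (Fin n) → ℝ)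
    (h : EuclideanSpace ℝ (Fin n) → EuclideanSpace ℝ (Fin m))
    (lam : EuclideanSpace ℝ (Fin m)) (r : ℝ) :
    Set (EuclideanSpace ℝ (Fin n) × ℝ) :=
  {p | Ltilde f h lam r p.1 p.2 = qtilde f h lam r}

/-! At `t = 0` the smoothing function is `f` on the feasible set and `⊤` off it, while `q̃` is
finite (look at `t = 1`). So a minimizer of the form `(x̂, 0)` is feasible with `q̃(λ̂, r̂) = f(x̂)`,
and evaluating at `(x, 0)` bounds every `q̃(λ, r)` by `f(x)` for feasible `x`. -/

section

variable {n m : ℕ} {f : EuclideanSpace ℝ (Fin n) → ℝ}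
  {h : EuclideanSpace ℝ (Fin n) → EuclideanSpace ℝ (Fin m)}
  {lam : EuclideanSpace ℝ (Fin m)} {r : ℝ} {x : EuclideanSpace ℝ (Fin n)}

theorem Ltilde_zero_of_feasible (hx : h x = 0) : Ltilde f h lam r x 0 = f x := by
  simp [Ltilde, hx]

theorem Ltilde_zero_of_infeasible (hx : h x ≠ 0) : Ltilde f h lam r x 0 = ⊤ := by
  simp [Ltilde, hx]

theorem qtilde_le_Ltilde (x : EuclideanSpace ℝ (Fin n)) (t : ℝ) :
    qtilde f h lam r ≤ Ltilde f h lam r x t :=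
  iInf_le (fun p : EuclideanSpace ℝ (Fin n) × ℝ => Ltilde f h lam r p.1 p.2) (x, t)

theorem qtilde_ne_top : qtilde f h lam r ≠ ⊤ := by
  refine ne_top_of_le_ne_top ?_ (qtilde_le_Ltilde 0 1)
  rw [Ltilde, if_pos one_pos]
  exact EReal.coe_ne_top _

theorem qtilde_le_of_feasible (hx : h x = 0) : qtilde f h lam r ≤ f x :=
  Ltilde_zero_of_feasible (lam := lam) (r := r) hx ▸ qtilde_le_Ltilde x 0

theorem feasible_of_mem_Aset (hmem : (x, (0 : ℝ)) ∈ Aset f h lam r) : h x = 0 := by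
  by_contra hx
  exact qtilde_ne_top (hmem.symm.trans (Ltilde_zero_of_infeasible hx))

theorem qtilde_eq_of_mem_Aset (hmem : (x, (0 : ℝ)) ∈ Aset f h lam r) : qtilde f h lam r = f x :=
  hmem.symm.trans (Ltilde_zero_of_feasible (feasible_of_mem_Aset hmem))

end

theorem stmt4_general {n m : ℕ} (f : EuclideanSpace ℝ (Fin n) → ℝ)
    (h : EuclideanSpace ℝ (Fin n) → EuclideanSpace ℝ (Fin m))
    (lamh : EuclideanSpace ℝ (Fin m)) (rh : ℝ)
    (xh : EuclideanSpace ℝ (Fin n))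
    (hmem : (xh, (0 : ℝ)) ∈ Aset f h lamh rh) :
    h xh = 0 ∧
    (∀ x : EuclideanSpace ℝ (Fin n), h x = 0 → f xh ≤ f x) ∧
    (∀ (lam : EuclideanSpace ℝ (Fin m)) (r : ℝ), 0 < r →
      qtilde f h lam r ≤ qtilde f h lamh rh) ∧
    qtilde f h lamh rh = ((f xh : ℝ) : EReal) := by
  have hfeas := feasible_of_mem_Aset hmem
  have hgap := qtilde_eq_of_mem_Aset hmem
  refine ⟨hfeas, fun x hx => ?_, fun lam r _ => ?_, hgap⟩
  · exact EReal.coe_le_coe_iff.mp (hgap ▸ qtilde_le_of_feasible hx)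
  · exact hgap ▸ qtilde_le_of_feasible hfeas

/-- if `(x̂, 0) ∈ A(λ̂, r̂)`, then `h x̂ = 0`, `x̂` is an optimal primal solution,
`(λ̂, r̂)` is an optimal dual solution, and there is no duality gap: `q̃(λ̂, r̂) = f x̂`. -/
theorem stmt4 {n m : ℕ} (f : EuclideanSpace ℝ (Fin n) → ℝ)
    (h : EuclideanSpace ℝ (Fin n) → EuclideanSpace ℝ (Fin m))
    (hf : ContDiff ℝ 2 f) (hh : ContDiff ℝ 2 h)
    (lamh : EuclideanSpace ℝ (Fin m)) (rh : ℝ) (hrh : 0 < rh)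
    (xh : EuclideanSpace ℝ (Fin n))
    (hmem : (xh, (0 : ℝ)) ∈ Aset f h lamh rh) :
    h xh = 0 ∧
    (∀ x : EuclideanSpace ℝ (Fin n), h x = 0 → f xh ≤ f x) ∧
    (∀ (lam : EuclideanSpace ℝ (Fin m)) (r : ℝ), 0 < r →
      qtilde f h lam r ≤ qtilde f h lamh rh) ∧
    qtilde f h lamh rh = ((f xh : ℝ) : EReal) :=
  stmt4_general f h lamh rh xh hmem
end
end

section
/- Suppose Algorithm 1 generates an infinite sequence {(xᵏ, t_k, λᵏ, r_k)}, i.e. t_{k+1} > 0 for all k, (x^{k+1}, t_{k+1}) ∈ A(λᵏ, r_k), λ^{k+1} = λᵏ + (r_k/t_{k+1}) h(x^{k+1}) and r_{k+1} = 2 r_k. If the sequence {r_k} is bounded, then the sequence {λᵏ} is bounded. (In fact ‖λ^{k+1} − λ⁰‖ ≤ Σ_{j=0}^{k} r_j = r_{k+1} − r₀ for all k.) -/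
noncomputable section

/-!
At a minimizer `(x̂, t̂)` of `L̃_{λ,r}` with `t̂ > 0`, minimality in `t` alone forces
`t̂ = ‖h x̂‖`, because `t ↦ r ‖h x̂‖² / (2t) + r t / 2` exceeds its value `r ‖h x̂‖` at
`t = ‖h x̂‖` by `r (t - ‖h x̂‖)² / (2t)`. Hence every multiplier update
`(r_k / t_{k+1}) h(x^{k+1})` has norm exactly `r_k = r_{k+1} - r_k`, and the bound on
`‖λᵏ - λ⁰‖` telescopes.
-/

lemma eq_of_smoothing_le {r t a : ℝ} (hr : 0 < r) (ht : 0 < t)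
    (hle : r / (2 * t) * a ^ 2 + r / 2 * t ≤ r * a) : t = a := by
  have hgap : r / (2 * t) * a ^ 2 + r / 2 * t - r * a = r / (2 * t) * (a - t) ^ 2 := by
    field_simp
    ring
  have hsq : (a - t) ^ 2 ≤ 0 :=
    nonpos_of_mul_nonpos_right (by linarith) (by positivity : 0 < r / (2 * t))
  nlinarith [sq_nonneg (a - t)]

lemma Ltilde_of_pos {n m : ℕ} (f : EuclideanSpace ℝ (Fin n) → ℝ)
    (h : EuclideanSpace ℝ (Fin n) → EuclideanSpace ℝ (Fin m))
    (lam : EuclideanSpace ℝ (Fin m)) (r : ℝ) (x : EuclideanSpace ℝ (Fin n)) {t : ℝ}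
    (ht : 0 < t) :
    Ltilde f h lam r x t = ((f x + inner ℝ lam (h x) + r / (2 * t) * ‖h x‖ ^ 2 + r / 2 * t : ℝ) :
      EReal) :=
  if_pos ht

section Minimizers

variable {n m : ℕ} {f : EuclideanSpace ℝ (Fin n) → ℝ}
  {h : EuclideanSpace ℝ (Fin n) → EuclideanSpace ℝ (Fin m)}
  {lam : EuclideanSpace ℝ (Fin m)} {r T : ℝ} {y : EuclideanSpace ℝ (Fin n)}

lemma Ltilde_le_of_mem_Aset (hp : (y, T) ∈ Aset f h lam r) (x : EuclideanSpace ℝ (Fin n))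
    (s : ℝ) : Ltilde f h lam r y T ≤ Ltilde f h lam r x s :=
  hp.le.trans (iInf_le (fun p : EuclideanSpace ℝ (Fin n) × ℝ => Ltilde f h lam r p.1 p.2) (x, s))

lemma eq_norm_of_mem_Aset (hr : 0 < r) (hT : 0 < T) (hp : (y, T) ∈ Aset f h lam r) :
    T = ‖h y‖ := by
  refine eq_of_smoothing_le hr hT ?_
  have hmin := Ltilde_le_of_mem_Aset hp y
  rcases (norm_nonneg (h y)).eq_or_lt with hzero | hH
  · have hy : h y = 0 := norm_eq_zero.mp hzero.symm
    have h0 := hmin 0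
    rw [Ltilde_of_pos f h lam r y hT] at h0
    simp only [Ltilde, lt_irrefl, if_false, hy, and_self, if_true, inner_zero_right,
      norm_zero, EReal.coe_le_coe_iff] at h0
    rw [← hzero]
    linarith
  · have hH' := hmin ‖h y‖
    rw [Ltilde_of_pos f h lam r y hT, Ltilde_of_pos f h lam r y hH, EReal.coe_le_coe_iff] at hH'
    have hcancel : r / (2 * ‖h y‖) * ‖h y‖ ^ 2 + r / 2 * ‖h y‖ = r * ‖h y‖ := by
      field_simp
      ring
    linarith

lemma norm_update_eq_of_mem_Aset (hr : 0 < r) (hT : 0 < T) (hp : (y, T) ∈ Aset f h lam r) :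
    ‖(r / T) • h y‖ = r := by
  have hTy := eq_norm_of_mem_Aset hr hT hp
  rw [norm_smul, Real.norm_of_nonneg (by positivity), ← hTy, div_mul_cancel₀ _ hT.ne']

end Minimizers

lemma norm_sub_zero_le_of_norm_succ_sub_le {E : Type*} [SeminormedAddCommGroup E]
    {u : ℕ → E} {s : ℕ → ℝ} (hu : ∀ k, ‖u (k + 1) - u k‖ ≤ s (k + 1) - s k) (k : ℕ) :
    ‖u k - u 0‖ ≤ s k - s 0 := by
  rw [← dist_eq_norm, dist_comm, ← Finset.sum_range_sub]
  exact dist_le_range_sum_of_dist_le k fun _ => by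
    rw [dist_comm, dist_eq_norm]
    exact hu _

theorem stmt6_general {n m : ℕ} (f : EuclideanSpace ℝ (Fin n) → ℝ)
    (h : EuclideanSpace ℝ (Fin n) → EuclideanSpace ℝ (Fin m))
    (x : ℕ → EuclideanSpace ℝ (Fin n)) (t : ℕ → ℝ)
    (lam : ℕ → EuclideanSpace ℝ (Fin m)) (rr : ℕ → ℝ)
    (hr0 : 0 < rr 0)
    (hstep : ∀ k, 0 < t (k + 1) ∧
      (x (k + 1), t (k + 1)) ∈ Aset f h (lam k) (rr k) ∧
      lam (k + 1) = lam k + (rr k / t (k + 1)) • h (x (k + 1)) ∧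
      rr (k + 1) = 2 * rr k) :
    (∀ k, ‖lam (k + 1) - lam 0‖ ≤ rr (k + 1) - rr 0) ∧
    ((∃ B, ∀ k, rr k ≤ B) → ∃ C, ∀ k, ‖lam k‖ ≤ C) := by
  have hrpos : ∀ k, 0 < rr k := by
    intro k
    induction k with
    | zero => exact hr0
    | succ k ih => rw [(hstep k).2.2.2]; positivity
  have hupdate : ∀ k, ‖lam (k + 1) - lam k‖ ≤ rr (k + 1) - rr k := fun k => by
    obtain ⟨hT, hmem, hlam, hrr⟩ := hstep k
    rw [hlam, add_sub_cancel_left, norm_update_eq_of_mem_Aset (hrpos k) hT hmem, hrr]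
    linarith
  have hdrift := norm_sub_zero_le_of_norm_succ_sub_le hupdate
  refine ⟨fun k => hdrift (k + 1), fun ⟨B, hB⟩ => ⟨‖lam 0‖ + (B - rr 0), fun k => ?_⟩⟩
  calc ‖lam k‖ ≤ ‖lam 0‖ + ‖lam k - lam 0‖ := norm_le_norm_add_norm_sub' _ _
    _ ≤ ‖lam 0‖ + (B - rr 0) := by linarith [hdrift k, hB k]

/-- along an infinite run of Algorithm 1,
`‖λ^{k+1} − λ⁰‖ ≤ Σ_{j≤k} r_j = r_{k+1} − r₀`; hence if `{r_k}` is bounded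
then `{λᵏ}` is bounded. -/
theorem stmt6 {n m : ℕ} (f : EuclideanSpace ℝ (Fin n) → ℝ)
    (h : EuclideanSpace ℝ (Fin n) → EuclideanSpace ℝ (Fin m))
    (hf : ContDiff ℝ 2 f) (hh : ContDiff ℝ 2 h)
    (x : ℕ → EuclideanSpace ℝ (Fin n)) (t : ℕ → ℝ)
    (lam : ℕ → EuclideanSpace ℝ (Fin m)) (rr : ℕ → ℝ)
    (hr0 : 0 < rr 0)
    (hstep : ∀ k, 0 < t (k + 1) ∧
      (x (k + 1), t (k + 1)) ∈ Aset f h (lam k) (rr k) ∧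
      lam (k + 1) = lam k + (rr k / t (k + 1)) • h (x (k + 1)) ∧
      rr (k + 1) = 2 * rr k) :
    (∀ k, ‖lam (k + 1) - lam 0‖ ≤ rr (k + 1) - rr 0) ∧
    ((∃ B, ∀ k, rr k ≤ B) → ∃ C, ∀ k, ‖lam k‖ ≤ C) :=
  stmt6_general f h x t lam rr hr0 hstep
end
end
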